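/- For every n ≥ 1 and every integer N ≥ 1 there exist a constant B > 0 and a finite subset F ⊆ SL_n(ℚ) with the following property: for every n×n real positive definite matrix T there exist γ ∈ SL_n(ℤ) with γ ≡ 1 (mod N) (i.e., every entry of γ − 1 is divisible by N) and t ∈ F such that, viewing γ·t as a real matrix by casting entries, ((γt)ᵀ · T · (γt))₀₀ ≤ B · det(T)^{1/n}. -/

import Mathlib

/-!
Minkowski's convex body theorem, applied to the ellipsoid `xᵀTx ≤ r²` (the preimage of a
sup-norm ball under a square root `S` of `T`), gives a nonzero integer vector `v` with
`vᵀTv ≤ 4n·det(T)^{1/n}`. Over a PID, `v = k·w` with `w` primitive, and a primitive vector is a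
column of some `δ ∈ SL_n(ℤ)`; since `k² ≥ 1`, `(δᵀTδ)₀₀ = wᵀTw ≤ vᵀTv`. Finally the principal
congruence subgroup `Γ(N)`, the kernel of reduction `SL_n(ℤ) → SL_n(ℤ/N)`, has finite index, so
`δ = γ·t` with `γ ∈ Γ(N)` and `t` in a fixed finite set of coset representatives.
-/

open Matrix MeasureTheory

theorem Matrix.PosDef.exists_transpose_mul_self_eq {ι : Type*} [Fintype ι] [DecidableEq ι]
    {T : Matrix ι ι ℝ} (hT : T.PosDef) : ∃ S : Matrix ι ι ℝ, Sᵀ * S = T := by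
  open scoped MatrixOrder in
  obtain ⟨S, hS⟩ := CStarAlgebra.nonneg_iff_eq_star_mul_self.mp hT.posSemidef.nonneg
  exact ⟨S, hS.symm⟩

theorem exists_int_ne_zero_mem_of_two_pow_card_lt_volume {ι : Type*} [Fintype ι]
    {s : Set (ι → ℝ)} (h_symm : ∀ x ∈ s, -x ∈ s) (h_conv : Convex ℝ s)
    (h : 2 ^ Fintype.card ι < volume s) :
    ∃ v : ι → ℤ, v ≠ 0 ∧ (fun i => (v i : ℝ)) ∈ s := by
  classical
  let b := Pi.basisFun ℝ ι
  have : Countable (Submodule.span ℤ (Set.range b)).toAddSubgroup :=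
    inferInstanceAs (Countable (Submodule.span ℤ (Set.range b)))
  have hb : Matrix.of b = 1 := by ext i j; simp [b, one_apply, Pi.single_apply, eq_comm]
  obtain ⟨x, hx0, hxs⟩ := exists_ne_zero_mem_lattice_of_measure_mul_two_pow_lt_measure
    (ZSpan.isAddFundamentalDomain' b volume) h_symm h_conv (by simpa [hb] using h)
  have hint : ∀ i, ∃ y : ℤ, (y : ℝ) = (x : ι → ℝ) i :=
    (b.mem_span_iff_repr_mem ℤ x).mp (SetLike.coe_mem x)
  choose v hv using hint
  have hxv : (fun i => (v i : ℝ)) = x := funext hv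
  refine ⟨v, fun h0 => hx0 ?_, hxv ▸ hxs⟩
  ext i
  simp [← hv, h0]

theorem Matrix.exists_int_ne_zero_norm_mulVec_le {ι : Type*} [Fintype ι] [DecidableEq ι]
    [Nonempty ι] {S : Matrix ι ι ℝ} (hS : S.det ≠ 0) :
    ∃ v : ι → ℤ, v ≠ 0 ∧
      ‖S *ᵥ fun i => (v i : ℝ)‖ ≤ 2 * |S.det| ^ (Fintype.card ι : ℝ)⁻¹ := by
  set ρ := 2 * |S.det| ^ (Fintype.card ι : ℝ)⁻¹
  have hρ : 0 ≤ ρ := by positivity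
  have hρn : ρ ^ Fintype.card ι = 2 ^ Fintype.card ι * |S.det| := by
    rw [mul_pow, Real.rpow_inv_natCast_pow (abs_nonneg _) Fintype.card_ne_zero]
  have hvol :
      volume (toLin' S ⁻¹' Metric.closedBall 0 ρ) = ENNReal.ofReal (4 ^ Fintype.card ι) := by
    rw [Measure.addHaar_preimage_linearMap _ (by rwa [LinearMap.det_toLin']),
      Real.volume_pi_closedBall _ hρ, LinearMap.det_toLin', ← ENNReal.ofReal_mul (by positivity),
      mul_pow, hρn, abs_inv]
    congr 1
    field_simp
    rw [← pow_mul, mul_comm, pow_mul]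
    norm_num
  obtain ⟨v, hv0, hv⟩ := exists_int_ne_zero_mem_of_two_pow_card_lt_volume
    (s := toLin' S ⁻¹' Metric.closedBall 0 ρ) (fun x hx => by simpa [mulVec_neg] using hx)
    ((convex_closedBall _ _).linear_preimage _) (by
      rw [hvol, ← ENNReal.ofReal_ofNat 2, ← ENNReal.ofReal_pow zero_le_two,
        ENNReal.ofReal_lt_ofReal_iff (by positivity)]
      exact pow_lt_pow_left₀ (by norm_num) zero_le_two Fintype.card_ne_zero)
  exact ⟨v, hv0, by simpa using hv⟩

theorem dotProduct_self_le_card_mul_norm_sq {ι : Type*} [Fintype ι] (y : ι → ℝ) :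
    y ⬝ᵥ y ≤ Fintype.card ι * ‖y‖ ^ 2 := by
  calc y ⬝ᵥ y = ∑ i, ‖y i‖ ^ 2 := by simp [dotProduct, sq]
    _ ≤ ∑ _i : ι, ‖y‖ ^ 2 := Finset.sum_le_sum fun i _ => by
          gcongr; exact norm_le_pi_norm y i
    _ = Fintype.card ι * ‖y‖ ^ 2 := by simp

theorem Module.Basis.exists_specialLinearGroup_col_eq_unit_smul {R ι : Type*} [CommRing R]
    [Fintype ι] [DecidableEq ι] (b : Module.Basis ι R (ι → R)) (i₀ : ι) :
    ∃ (δ : SpecialLinearGroup ι R) (u : Rˣ), (fun i => δ i i₀) = u • b i₀ := by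
  let A := (Pi.basisFun R ι).toMatrix b
  let u := ((Pi.basisFun R ι).isUnit_det b).unit
  have hA : A.det = u := ((Pi.basisFun R ι).det_apply b).symm.trans (IsUnit.unit_spec _).symm
  let D : Matrix ι ι R := diagonal (Pi.mulSingle i₀ (↑u⁻¹ : R))
  have hD : D.det = ↑u⁻¹ := by simp [D, det_diagonal, Finset.prod_pi_mulSingle']
  refine ⟨⟨A * D, by rw [det_mul, hA, hD, Units.mul_inv]⟩, u⁻¹, funext fun i => ?_⟩
  simp [A, D, mul_diagonal, Module.Basis.toMatrix_apply, Units.smul_def, mul_comm]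

section PID

variable {R ι : Type*} [CommRing R] [IsDomain R] [IsPrincipalIdealRing R] [Fintype ι]

theorem exists_basis_apply_eq_of_apply_eq_one {p : ι → R} {f : (ι → R) →ₗ[R] R} (hf : f p = 1)
    (i₀ : ι) : ∃ b : Module.Basis ι R (ι → R), b i₀ = p := by
  classical
  obtain ⟨m, bk⟩ := Submodule.basisOfPid (Pi.basisFun R ι) (LinearMap.ker f)
  have hli : ∀ (c : R), ∀ x ∈ LinearMap.ker f, c • p + x = 0 → c = 0 := fun c x hx hcx => by
    simpa [LinearMap.mem_ker.mp hx, hf] using congrArg f hcx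
  have hsp : ∀ z : ι → R, ∃ c : R, z + c • p ∈ LinearMap.ker f := fun z =>
    ⟨-f z, by simp [hf]⟩
  let b₀ := Module.Basis.mkFinCons p bk hli hsp
  let e := b₀.indexEquiv (Pi.basisFun R ι)
  refine ⟨b₀.reindex (e.trans (Equiv.swap (e 0) i₀)), ?_⟩
  simp [b₀, Module.Basis.coe_mkFinCons]

theorem exists_eq_smul_of_ne_zero {v : ι → R} (hv : v ≠ 0) :
    ∃ (d : R) (p : ι → R), v = d • p ∧ ∃ f : (ι → R) →ₗ[R] R, f p = 1 := by
  classical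
  let d := Submodule.IsPrincipal.generator (Submodule.span R (Set.range v))
  have hdvd : ∀ i, d ∣ v i := fun i =>
    (Submodule.IsPrincipal.mem_iff_generator_dvd _).mp (Submodule.subset_span ⟨i, rfl⟩)
  choose p hp using hdvd
  obtain ⟨c, hc⟩ := (Submodule.mem_span_range_iff_exists_fun R).mp
    (Submodule.IsPrincipal.generator_mem (Submodule.span R (Set.range v)))
  have hd0 : d ≠ 0 := fun h0 => hv (funext fun i => by simp [hp i, h0])
  refine ⟨d, p, funext hp, Fintype.linearCombination R c, mul_left_cancel₀ hd0 ?_⟩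
  calc d * Fintype.linearCombination R c p = ∑ i, c i • v i := by
        simp only [Fintype.linearCombination_apply, smul_eq_mul, Finset.mul_sum, hp]
        exact Finset.sum_congr rfl fun i _ => by ring
    _ = d * 1 := by rw [hc, mul_one]

theorem exists_eq_smul_specialLinearGroup_col [DecidableEq ι] (v : ι → R) (i₀ : ι) :
    ∃ (δ : SpecialLinearGroup ι R) (k : R), v = k • fun i => δ i i₀ := by
  by_cases hv : v = 0
  · exact ⟨1, 0, by simp [hv]⟩
  obtain ⟨d, p, rfl, f, hf⟩ := exists_eq_smul_of_ne_zero hv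
  obtain ⟨b, hb⟩ := exists_basis_apply_eq_of_apply_eq_one hf i₀
  obtain ⟨δ, u, hδ⟩ := b.exists_specialLinearGroup_col_eq_unit_smul i₀
  refine ⟨δ, d * ↑u⁻¹, ?_⟩
  rw [hδ, hb, Units.smul_def, smul_smul, mul_assoc, Units.inv_mul, mul_one]

end PID

theorem Matrix.PosDef.exists_int_ne_zero_dotProduct_mulVec_le {ι : Type*} [Fintype ι]
    [DecidableEq ι] [Nonempty ι] {T : Matrix ι ι ℝ} (hT : T.PosDef) :
    ∃ v : ι → ℤ, v ≠ 0 ∧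
      (fun i => (v i : ℝ)) ⬝ᵥ T *ᵥ (fun i => (v i : ℝ))
        ≤ 4 * Fintype.card ι * T.det ^ (Fintype.card ι : ℝ)⁻¹ := by
  obtain ⟨S, rfl⟩ := hT.exists_transpose_mul_self_eq
  have hS : S.det ≠ 0 := fun h => hT.det_pos.ne' (by simp [h])
  obtain ⟨v, hv0, hv⟩ := exists_int_ne_zero_norm_mulVec_le hS
  refine ⟨v, hv0, ?_⟩
  set x : ι → ℝ := fun i => (v i : ℝ)
  have hdet : (Sᵀ * S).det = |S.det| ^ 2 := by simp [sq]
  calc x ⬝ᵥ (Sᵀ * S) *ᵥ x = (S *ᵥ x) ⬝ᵥ (S *ᵥ x) := by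
        rw [← mulVec_mulVec, dotProduct_mulVec, vecMul_transpose]
    _ ≤ Fintype.card ι * ‖S *ᵥ x‖ ^ 2 := dotProduct_self_le_card_mul_norm_sq _
    _ ≤ Fintype.card ι * (2 * |S.det| ^ (Fintype.card ι : ℝ)⁻¹) ^ 2 := by gcongr
    _ = 4 * Fintype.card ι * (Sᵀ * S).det ^ (Fintype.card ι : ℝ)⁻¹ := by
        rw [hdet, ← Real.rpow_pow_comm (abs_nonneg _)]; ring

theorem Matrix.PosDef.exists_specialLinearGroup_col_dotProduct_mulVec_le {ι : Type*}
    [Fintype ι] [DecidableEq ι] [Nonempty ι] {T : Matrix ι ι ℝ} (hT : T.PosDef) (i₀ : ι) :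
    ∃ δ : SpecialLinearGroup ι ℤ,
      (fun i => (δ i i₀ : ℝ)) ⬝ᵥ T *ᵥ (fun i => (δ i i₀ : ℝ))
        ≤ 4 * Fintype.card ι * T.det ^ (Fintype.card ι : ℝ)⁻¹ := by
  obtain ⟨v, hv0, hv⟩ := hT.exists_int_ne_zero_dotProduct_mulVec_le
  obtain ⟨δ, k, rfl⟩ := exists_eq_smul_specialLinearGroup_col v i₀
  refine ⟨δ, le_trans ?_ hv⟩
  set w : ι → ℝ := fun i => (δ i i₀ : ℝ)
  have hk : 1 ≤ (k : ℝ) ^ 2 := by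
    have : k ≠ 0 := by rintro rfl; exact hv0 (zero_smul _ _)
    exact one_le_sq_iff_one_le_abs _ |>.mpr (by exact_mod_cast Int.one_le_abs this)
  have hvw : (fun i => ((k • fun i => δ i i₀) i : ℝ)) = (k : ℝ) • w := by
    ext i; simp [w]
  have hw : 0 ≤ w ⬝ᵥ T *ᵥ w := by simpa using hT.posSemidef.dotProduct_mulVec_nonneg w
  rw [hvw, mulVec_smul, dotProduct_smul, smul_dotProduct, smul_smul, smul_eq_mul, ← sq]
  nlinarith

theorem MonoidHom.exists_finset_mem_ker_mul_eq {G H : Type*} [Group G] [Group H] [Finite H]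
    (φ : G →* H) : ∃ F : Finset G, ∀ g, ∃ k ∈ φ.ker, ∃ t ∈ F, k * t = g := by
  classical
  have := Fintype.ofFinite φ.range
  let s := Function.surjInv φ.rangeRestrict_surjective
  refine ⟨Finset.univ.image s, fun g => ⟨g * (s (φ.rangeRestrict g))⁻¹, ?_,
    s (φ.rangeRestrict g), Finset.mem_image_of_mem _ (Finset.mem_univ _),
    inv_mul_cancel_right _ _⟩⟩
  have hs := congrArg Subtype.val
    (Function.surjInv_eq φ.rangeRestrict_surjective (φ.rangeRestrict g))
  rw [MonoidHom.mem_ker, map_mul, map_inv, mul_inv_eq_one]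
  simpa using hs.symm

theorem Matrix.SpecialLinearGroup.dvd_sub_one_of_mem_ker_map {ι : Type*} [Fintype ι]
    [DecidableEq ι] {N : ℤ} {γ : SpecialLinearGroup ι ℤ}
    (hγ : γ ∈ (map (n := ι) (Int.castRingHom (ZMod N.natAbs))).ker) (i j : ι) :
    N ∣ (γ : Matrix ι ι ℤ) i j - (1 : Matrix ι ι ℤ) i j := by
  rw [MonoidHom.mem_ker] at hγ
  have h := congrArg (fun A : SpecialLinearGroup ι (ZMod N.natAbs) =>
    (A : Matrix ι ι (ZMod N.natAbs)) i j) hγ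
  simp only [SpecialLinearGroup.map_apply_coe, RingHom.mapMatrix_apply, map_apply,
    eq_intCast, SpecialLinearGroup.coe_one] at h
  rw [← Int.natAbs_dvd, ← ZMod.intCast_zmod_eq_zero_iff_dvd, Int.cast_sub, h, sub_eq_zero]
  by_cases hij : i = j <;> simp [one_apply, hij]

/-- For every `n ≥ 1` and every integer `N ≥ 1` there exist a constant `B > 0` and a
finite subset `F ⊆ SL_n(ℚ)` with the following property: for every `n×n` real positive
definite matrix `T` there exist `γ ∈ SL_n(ℤ)` with `γ ≡ 1 (mod N)` (i.e., every entry of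
`γ − 1` is divisible by `N`) and `t ∈ F` such that, viewing `γ·t` as a real matrix by
casting entries, `((γt)ᵀ · T · (γt))₀₀ ≤ B · det(T)^{1/n}`. -/
theorem stmt_14 (n : ℕ) (hn : 1 ≤ n) (N : ℤ) (hN : 1 ≤ N) :
    ∃ B : ℝ, 0 < B ∧ ∃ F : Finset (Matrix.SpecialLinearGroup (Fin n) ℚ),
      ∀ T : Matrix (Fin n) (Fin n) ℝ, T.PosDef →
        ∃ γ : Matrix.SpecialLinearGroup (Fin n) ℤ,
          (∀ i j : Fin n,
            N ∣ ((γ : Matrix (Fin n) (Fin n) ℤ) i j - (1 : Matrix (Fin n) (Fin n) ℤ) i j)) ∧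
          ∃ t ∈ F,
            letI g : Matrix (Fin n) (Fin n) ℝ :=
              (((Matrix.SpecialLinearGroup.map (Int.castRingHom ℚ)) γ * t :
                  Matrix.SpecialLinearGroup (Fin n) ℚ) : Matrix (Fin n) (Fin n) ℚ).map
                (fun a : ℚ => (a : ℝ))
            (gᵀ * T * g) ⟨0, hn⟩ ⟨0, hn⟩ ≤ B * T.det ^ ((1 : ℝ) / n) := by
  have : NeZero N.natAbs := ⟨by omega⟩
  have : Nonempty (Fin n) := ⟨⟨0, hn⟩⟩
  set ψ := SpecialLinearGroup.map (n := Fin n) (Int.castRingHom ℚ)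
  obtain ⟨F, hF⟩ := (SpecialLinearGroup.map (n := Fin n)
    (Int.castRingHom (ZMod N.natAbs))).exists_finset_mem_ker_mul_eq
  refine ⟨4 * n, by positivity, F.image ψ, fun T hT => ?_⟩
  obtain ⟨δ, hδ⟩ := hT.exists_specialLinearGroup_col_dotProduct_mulVec_le ⟨0, hn⟩
  obtain ⟨γ, hγ, t, ht, rfl⟩ := hF δ
  refine ⟨γ, SpecialLinearGroup.dvd_sub_one_of_mem_ker_map hγ, ψ t,
    Finset.mem_image_of_mem _ ht, ?_⟩
  have hg : ((ψ γ * ψ t : SpecialLinearGroup (Fin n) ℚ) : Matrix (Fin n) (Fin n) ℚ).map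
      (fun a : ℚ => (a : ℝ)) =
      ((γ * t : SpecialLinearGroup (Fin n) ℤ) : Matrix (Fin n) (Fin n) ℤ).map (↑) := by
    rw [← map_mul, SpecialLinearGroup.map_apply_coe, RingHom.mapMatrix_apply, Matrix.map_map]
    ext; simp
  rw [Fintype.card_fin] at hδ
  rw [hg, mul_mul_apply, one_div]
  exact hδ
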